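/- arXiv:2602.16581 — 2 statements merged into one kernel-verified Lean document; each statement's English description precedes it below -/
import Mathlib

section
/- Let β : ℝ^d × ℝ^d → [s0, s1] ⊂ (0,1) be measurable, κ > 0, and define ν(x,y) = d/2 + β(x,y), P(β) = π^(−d/2) · 2^(1 − d/2 + β) / |Γ(−β)| · κ^(d/2 + β), and γ(x,y) = (1/2) P(β(x,y)) K_{ν(x,y)}(κ|x−y|) |x−y|^{ν(x,y)} / |x−y|^{d + 2β(x,y)}. Then there exist r0 > 0 and constants c1, c2 > 0 such that for all x, y with 0 < |x−y| ≤ r0, c1 |x−y|^{−(d+2β(x,y))} ≤ γ(x,y) ≤ c2 |x−y|^{−(d+2β(x,y))}. -/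
open MeasureTheory Real Set

noncomputable section

/-- Modified Bessel function of the second kind (integral representation). -/
def besselK (ν z : ℝ) : ℝ :=
  ∫ t in Set.Ioi (0 : ℝ), Real.exp (-z * Real.cosh t) * Real.cosh (ν * t)

/-- The prefactor `P(β) = π^(−d/2) · 2^(1 − d/2 + β) / |Γ(−β)| · κ^(d/2 + β)`. -/
def kernelPrefactor (d : ℕ) (κ β : ℝ) : ℝ :=
  Real.pi ^ (-(d : ℝ) / 2) * 2 ^ (1 - (d : ℝ) / 2 + β) / |Real.Gamma (-β)| *
    κ ^ ((d : ℝ) / 2 + β)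

/-- The variable-order kernel
`γ(x,y) = (1/2) P(β(x,y)) K_{ν(x,y)}(κ|x−y|) |x−y|^{ν(x,y)} / |x−y|^{d+2β(x,y)}`
with `ν(x,y) = d/2 + β(x,y)`. -/
def varKernel (d : ℕ) (κ : ℝ)
    (β : EuclideanSpace ℝ (Fin d) × EuclideanSpace ℝ (Fin d) → ℝ)
    (x y : EuclideanSpace ℝ (Fin d)) : ℝ :=
  (1 / 2) * kernelPrefactor d κ (β (x, y)) *
    besselK ((d : ℝ) / 2 + β (x, y)) (κ * ‖x - y‖) *
    ‖x - y‖ ^ ((d : ℝ) / 2 + β (x, y)) / ‖x - y‖ ^ ((d : ℝ) + 2 * β (x, y))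

/-! With `z = κ |x - y|` and `ν = d/2 + β`, the kernel factors as
`P(β) κ^(-ν) / 2 · K_ν(z) z^ν · |x - y|^(-(d + 2β))`, so it suffices to bound the first two
factors above and below by positive constants for `β ∈ [s0, s1]` and `0 < z ≤ 1`.

For the Bessel factor put `L = -log z ≥ 0`. On `(L, L + 1]` the integrand
`exp (-z cosh t) cosh (ν t)` is at least `exp (-e) z^(-ν) / 2`, giving the lower bound. Conversely
`cosh t ≥ exp t / 2` and `cosh (ν t) ≤ exp (ν t)` dominate it by `z^(-ν) exp (ν s - exp s / 2)`
with `s = t - L`; the integral of this over `ℝ` is finite (it is `2^ν Γ(ν)`) and at most the sum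
of the integrals at the endpoints `ν₀ ≤ ν ≤ ν₁`.

The prefactor is continuous and positive on `[s0, s1]` because `-β ∈ (-1, 0)` stays away from the
poles of `Γ`, so compactness bounds it. -/

lemma cosh_le_exp_of_nonneg {t : ℝ} (ht : 0 ≤ t) : cosh t ≤ exp t := by
  rw [cosh_eq]
  linarith [exp_le_exp.mpr (neg_le_self ht)]

lemma exp_le_two_mul_cosh (t : ℝ) : exp t ≤ 2 * cosh t := by
  rw [cosh_eq]
  linarith [exp_pos (-t)]

lemma integrable_exp_mul_sub_mul_exp {ν b : ℝ} (hν : 0 < ν) (hb : 0 < b) :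
    Integrable fun s => exp (ν * s - b * exp s) := by
  -- the substitution `u = exp s` turns this into the `Γ`-integrand `u ^ (ν - 1) * exp (-b * u)`
  have hGamma : IntegrableOn (fun u : ℝ => u ^ (ν - 1) * exp (-b * u ^ (1 : ℝ))) (exp '' univ) := by
    rw [image_univ, range_exp]
    exact integrableOn_rpow_mul_exp_neg_mul_rpow (by linarith) one_pos hb
  rw [integrableOn_image_iff_integrableOn_abs_deriv_smul MeasurableSet.univ
    (fun s _ => (hasDerivAt_exp s).hasDerivWithinAt) exp_injective.injOn,
    integrableOn_univ] at hGamma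
  refine hGamma.congr (Filter.Eventually.of_forall fun s => ?_)
  dsimp only
  rw [abs_of_pos (exp_pos s), smul_eq_mul, rpow_one, ← exp_mul, ← exp_add, ← exp_add]
  ring_nf

lemma exp_neg_mul_cosh_mul_cosh_le {ν z t : ℝ} (hν : 0 ≤ ν) (hz : 0 < z) (ht : 0 ≤ t) :
    exp (-z * cosh t) * cosh (ν * t) ≤
      z ^ (-ν) * exp (ν * (t + log z) - 2⁻¹ * exp (t + log z)) := by
  have hrhs : z ^ (-ν) * exp (ν * (t + log z) - 2⁻¹ * exp (t + log z)) =
      exp (-z * (exp t / 2)) * exp (ν * t) := by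
    rw [rpow_def_of_pos hz, exp_add t, exp_log hz, ← exp_add, ← exp_add]
    ring_nf
  rw [hrhs]
  refine mul_le_mul (exp_le_exp.mpr ?_) (cosh_le_exp_of_nonneg (mul_nonneg hν ht))
    (cosh_pos _).le (exp_pos _).le
  nlinarith [exp_le_two_mul_cosh t]

lemma integrableOn_besselK_integrand {ν z : ℝ} (hν : 0 < ν) (hz : 0 < z) :
    IntegrableOn (fun t => exp (-z * cosh t) * cosh (ν * t)) (Ioi 0) := by
  have hdom : Integrable fun t => z ^ (-ν) * exp (ν * (t + log z) - 2⁻¹ * exp (t + log z)) :=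
    ((integrable_exp_mul_sub_mul_exp hν (by norm_num)).comp_add_right (log z)).const_mul _
  refine hdom.integrableOn.mono' (by fun_prop) ?_
  filter_upwards [ae_restrict_mem measurableSet_Ioi] with t ht
  rw [norm_of_nonneg (by positivity)]
  exact exp_neg_mul_cosh_mul_cosh_le hν.le hz (le_of_lt ht)

lemma besselK_le_integral_mul_rpow_neg {ν z : ℝ} (hν : 0 < ν) (hz : 0 < z) :
    besselK ν z ≤ (∫ s, exp (ν * s - 2⁻¹ * exp s)) * z ^ (-ν) := by
  have hdom : Integrable fun t => z ^ (-ν) * exp (ν * (t + log z) - 2⁻¹ * exp (t + log z)) :=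
    ((integrable_exp_mul_sub_mul_exp hν (by norm_num)).comp_add_right (log z)).const_mul _
  calc besselK ν z
      ≤ ∫ t in Ioi 0, z ^ (-ν) * exp (ν * (t + log z) - 2⁻¹ * exp (t + log z)) :=
        setIntegral_mono_on (integrableOn_besselK_integrand hν hz) hdom.integrableOn
          measurableSet_Ioi fun t ht => exp_neg_mul_cosh_mul_cosh_le hν.le hz (le_of_lt ht)
    _ ≤ ∫ t, z ^ (-ν) * exp (ν * (t + log z) - 2⁻¹ * exp (t + log z)) :=
        setIntegral_le_integral hdom (Filter.Eventually.of_forall fun t => by positivity)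
    _ = (∫ s, exp (ν * s - 2⁻¹ * exp s)) * z ^ (-ν) := by
        rw [integral_const_mul, integral_add_right_eq_self (fun s => exp (ν * s - 2⁻¹ * exp s)),
          mul_comm]

lemma exists_besselK_le_mul_rpow_neg {ν₀ : ℝ} (hν₀ : 0 < ν₀) (ν₁ : ℝ) :
    ∃ C > 0, ∀ ν ∈ Icc ν₀ ν₁, ∀ z > 0, besselK ν z ≤ C * z ^ (-ν) := by
  have hI {ν : ℝ} (hν : 0 < ν) := integrable_exp_mul_sub_mul_exp hν (b := 2⁻¹) (by norm_num)
  refine ⟨(∫ s, exp (ν₀ * s - 2⁻¹ * exp s)) + ∫ s, exp (ν₁ * s - 2⁻¹ * exp s),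
    add_pos_of_pos_of_nonneg (integral_exp_pos (hI hν₀)) (integral_nonneg fun _ => (exp_pos _).le),
    fun ν hν z hz => ?_⟩
  have hν0 : 0 < ν := hν₀.trans_le hν.1
  have hν1 : 0 < ν₁ := hν0.trans_le hν.2
  refine (besselK_le_integral_mul_rpow_neg hν0 hz).trans
    (mul_le_mul_of_nonneg_right ?_ (rpow_nonneg hz.le _))
  rw [← integral_add (hI hν₀) (hI hν1)]
  refine integral_mono (hI hν0) ((hI hν₀).add (hI hν1)) fun s => ?_
  have hexp : ν * s ≤ ν₀ * s ∨ ν * s ≤ ν₁ * s := by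
    rcases le_total s 0 with hs | hs
    · exact Or.inl (by nlinarith [hν.1])
    · exact Or.inr (by nlinarith [hν.2])
  rcases hexp with h | h
  · linarith [exp_le_exp.mpr (sub_le_sub_right h (2⁻¹ * exp s)), exp_pos (ν₁ * s - 2⁻¹ * exp s)]
  · linarith [exp_le_exp.mpr (sub_le_sub_right h (2⁻¹ * exp s)), exp_pos (ν₀ * s - 2⁻¹ * exp s)]

lemma exp_neg_exp_one_div_two_mul_rpow_neg_le_besselK {ν z : ℝ} (hν : 0 < ν) (hz : 0 < z)
    (hz1 : z ≤ 1) : exp (-exp 1) / 2 * z ^ (-ν) ≤ besselK ν z := by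
  set L := -log z with hL
  have hL0 : 0 ≤ L := neg_nonneg.mpr (log_nonpos hz.le hz1)
  have hsub : Ioc L (L + 1) ⊆ Ioi 0 := fun t ht => hL0.trans_lt ht.1
  have hint := integrableOn_besselK_integrand hν hz
  have hpt : ∀ t ∈ Ioc L (L + 1),
      exp (-exp 1) / 2 * z ^ (-ν) ≤ exp (-z * cosh t) * cosh (ν * t) := by
    rintro t ⟨hLt, htL⟩
    have hzcosh : z * cosh t ≤ exp 1 := calc
      z * cosh t ≤ z * exp t :=
        mul_le_mul_of_nonneg_left (cosh_le_exp_of_nonneg (hL0.trans hLt.le)) hz.le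
      _ = exp (t - L) := by rw [hL, sub_neg_eq_add, exp_add, exp_log hz, mul_comm]
      _ ≤ exp 1 := exp_le_exp.mpr (by linarith)
    have hcosh : z ^ (-ν) ≤ 2 * cosh (ν * t) := calc
      z ^ (-ν) = exp (ν * L) := by rw [rpow_def_of_pos hz, hL]; ring_nf
      _ ≤ exp (ν * t) := exp_le_exp.mpr (by nlinarith)
      _ ≤ 2 * cosh (ν * t) := exp_le_two_mul_cosh _
    calc exp (-exp 1) / 2 * z ^ (-ν) = exp (-exp 1) * (z ^ (-ν) / 2) := by ring
      _ ≤ exp (-z * cosh t) * cosh (ν * t) :=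
        mul_le_mul (exp_le_exp.mpr (by linarith)) (by linarith) (by positivity) (exp_pos _).le
  calc exp (-exp 1) / 2 * z ^ (-ν) = exp (-exp 1) / 2 * z ^ (-ν) * volume.real (Ioc L (L + 1)) := by
        simp
    _ ≤ ∫ t in Ioc L (L + 1), exp (-z * cosh t) * cosh (ν * t) :=
        setIntegral_ge_of_const_le_real measurableSet_Ioc (by simp) hpt (hint.mono_set hsub)
    _ ≤ besselK ν z :=
        setIntegral_mono_set hint (Filter.Eventually.of_forall fun t => by positivity)
          hsub.eventuallyLE

lemma exists_besselK_mul_rpow_mem_Icc {ν₀ : ℝ} (hν₀ : 0 < ν₀) (ν₁ : ℝ) :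
    ∃ A > 0, ∃ B > 0, ∀ ν ∈ Icc ν₀ ν₁, ∀ z ∈ Ioc (0 : ℝ) 1, besselK ν z * z ^ ν ∈ Icc A B := by
  obtain ⟨B, hB, hle⟩ := exists_besselK_le_mul_rpow_neg hν₀ ν₁
  refine ⟨exp (-exp 1) / 2, by positivity, B, hB, fun ν hν z ⟨hz, hz1⟩ => ⟨?_, ?_⟩⟩
  all_goals have hcancel : z ^ (-ν) * z ^ ν = 1 := by rw [← rpow_add hz, neg_add_cancel, rpow_zero]
  · calc exp (-exp 1) / 2 = exp (-exp 1) / 2 * z ^ (-ν) * z ^ ν := by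
          rw [mul_assoc, hcancel, mul_one]
      _ ≤ besselK ν z * z ^ ν := mul_le_mul_of_nonneg_right
          (exp_neg_exp_one_div_two_mul_rpow_neg_le_besselK (hν₀.trans_le hν.1) hz hz1)
          (rpow_nonneg hz.le _)
  · calc besselK ν z * z ^ ν ≤ B * z ^ (-ν) * z ^ ν :=
          mul_le_mul_of_nonneg_right (hle ν hν z hz) (rpow_nonneg hz.le _)
      _ = B := by rw [mul_assoc, hcancel, mul_one]

lemma neg_ne_neg_natCast_of_mem_Ioo {b : ℝ} (hb : b ∈ Ioo 0 1) (m : ℕ) : -b ≠ -m := by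
  intro h
  have h0 : (0 : ℝ) < m := neg_injective h ▸ hb.1
  have h1 : (m : ℝ) < 1 := neg_injective h ▸ hb.2
  norm_cast at h0 h1
  omega

lemma kernelPrefactor_pos (d : ℕ) {κ b : ℝ} (hκ : 0 < κ) (hb : b ∈ Ioo 0 1) :
    0 < kernelPrefactor d κ b := by
  have := abs_pos.mpr (Gamma_ne_zero (neg_ne_neg_natCast_of_mem_Ioo hb))
  unfold kernelPrefactor
  positivity

lemma continuousOn_kernelPrefactor (d : ℕ) {κ : ℝ} (hκ : 0 < κ) :
    ContinuousOn (kernelPrefactor d κ) (Ioo 0 1) := by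
  intro b hb
  have hΓ : ContinuousAt (fun b => |Gamma (-b)|) b :=
    ((differentiableAt_Gamma (neg_ne_neg_natCast_of_mem_Ioo hb)).continuousAt.comp
      continuousAt_neg).abs
  exact ((continuousAt_const.mul (continuousAt_const.rpow (by fun_prop) (Or.inl two_ne_zero))).div
    hΓ (abs_ne_zero.mpr (Gamma_ne_zero (neg_ne_neg_natCast_of_mem_Ioo hb)))).mul
    (continuousAt_const.rpow (by fun_prop) (Or.inl hκ.ne')) |>.continuousWithinAt

lemma IsCompact.exists_pos_forall_mem_Icc {α : Type*} [TopologicalSpace α] {f : α → ℝ}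
    {s : Set α} (hs : IsCompact s) (hf : ContinuousOn f s) (hpos : ∀ x ∈ s, 0 < f x) :
    ∃ m > 0, ∃ M > 0, ∀ x ∈ s, f x ∈ Icc m M := by
  obtain ⟨m, hm, hmf⟩ := hs.exists_forall_le' hf hpos
  obtain ⟨M, hM⟩ := hs.bddAbove_image hf
  exact ⟨m, hm, max M 1, by positivity,
    fun x hx => ⟨hmf x hx, (hM (mem_image_of_mem f hx)).trans (le_max_left _ _)⟩⟩

lemma varKernel_eq_mul (d : ℕ) {κ : ℝ} (hκ : 0 < κ)
    (β : EuclideanSpace ℝ (Fin d) × EuclideanSpace ℝ (Fin d) → ℝ)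
    (x y : EuclideanSpace ℝ (Fin d)) :
    varKernel d κ β x y =
      (1 / 2 * kernelPrefactor d κ (β (x, y)) * κ ^ (-((d : ℝ) / 2 + β (x, y)))) *
      (besselK ((d : ℝ) / 2 + β (x, y)) (κ * ‖x - y‖) *
        (κ * ‖x - y‖) ^ ((d : ℝ) / 2 + β (x, y))) *
      ‖x - y‖ ^ (-((d : ℝ) + 2 * β (x, y))) := by
  have hκν : κ ^ ((d : ℝ) / 2 + β (x, y)) ≠ 0 := (rpow_pos_of_pos hκ _).ne'
  rw [varKernel, mul_rpow hκ.le (norm_nonneg _), rpow_neg hκ.le, rpow_neg (norm_nonneg _),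
    div_eq_mul_inv]
  field_simp

theorem varKernel_near_diagonal_bounds_general
    (d : ℕ) (κ : ℝ) (hκ : 0 < κ)
    (s0 s1 : ℝ) (hs0 : 0 < s0) (hs1 : s1 < 1)
    (β : EuclideanSpace ℝ (Fin d) × EuclideanSpace ℝ (Fin d) → ℝ)
    (hβrange : ∀ p, β p ∈ Set.Icc s0 s1) :
    ∃ r0 > (0 : ℝ), ∃ c1 > (0 : ℝ), ∃ c2 > (0 : ℝ),
      ∀ x y : EuclideanSpace ℝ (Fin d), 0 < ‖x - y‖ → ‖x - y‖ ≤ r0 →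
        c1 * ‖x - y‖ ^ (-((d : ℝ) + 2 * β (x, y))) ≤ varKernel d κ β x y ∧
        varKernel d κ β x y ≤ c2 * ‖x - y‖ ^ (-((d : ℝ) + 2 * β (x, y))) := by
  have hIcc : Icc s0 s1 ⊆ Ioo 0 1 := Icc_subset_Ioo hs0 hs1
  obtain ⟨m, hm, M, hM, hH⟩ := isCompact_Icc.exists_pos_forall_mem_Icc
    (f := fun b => 1 / 2 * kernelPrefactor d κ b * κ ^ (-((d : ℝ) / 2 + b)))
    (((continuousOn_const.mul (continuousOn_kernelPrefactor d hκ)).mono hIcc).mul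
      (continuousOn_const.rpow (by fun_prop) fun _ _ => Or.inl hκ.ne'))
    fun b hb => by have := kernelPrefactor_pos d hκ (hIcc hb); positivity
  obtain ⟨A, hA, B, hB, hK⟩ :=
    exists_besselK_mul_rpow_mem_Icc (ν₀ := (d : ℝ) / 2 + s0) (by positivity) ((d : ℝ) / 2 + s1)
  refine ⟨κ⁻¹, inv_pos.mpr hκ, m * A, mul_pos hm hA, M * B, mul_pos hM hB, fun x y hr hr0 => ?_⟩
  have hb := hβrange (x, y)
  have hHb := hH _ hb
  have hKb := hK ((d : ℝ) / 2 + β (x, y)) ⟨by linarith [hb.1], by linarith [hb.2]⟩ (κ * ‖x - y‖)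
    ⟨mul_pos hκ hr, (le_div_iff₀' hκ).mp (by rwa [one_div])⟩
  have hR := rpow_nonneg hr.le (-((d : ℝ) + 2 * β (x, y)))
  rw [varKernel_eq_mul d hκ]
  exact ⟨mul_le_mul_of_nonneg_right (mul_le_mul hHb.1 hKb.1 hA.le (hm.le.trans hHb.1)) hR,
    mul_le_mul_of_nonneg_right (mul_le_mul hHb.2 hKb.2 (hA.le.trans hKb.1) hM.le) hR⟩

/-- Near-diagonal two-sided power-law bounds for the variable-order kernel. -/
theorem varKernel_near_diagonal_bounds
    (d : ℕ) (hd : 1 ≤ d) (κ : ℝ) (hκ : 0 < κ)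
    (s0 s1 : ℝ) (hs0 : 0 < s0) (hs01 : s0 ≤ s1) (hs1 : s1 < 1)
    (β : EuclideanSpace ℝ (Fin d) × EuclideanSpace ℝ (Fin d) → ℝ)
    (hβmeas : Measurable β)
    (hβrange : ∀ p, β p ∈ Set.Icc s0 s1) :
    ∃ r0 > (0 : ℝ), ∃ c1 > (0 : ℝ), ∃ c2 > (0 : ℝ),
      ∀ x y : EuclideanSpace ℝ (Fin d), 0 < ‖x - y‖ → ‖x - y‖ ≤ r0 →
        c1 * ‖x - y‖ ^ (-((d : ℝ) + 2 * β (x, y))) ≤ varKernel d κ β x y ∧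
        varKernel d κ β x y ≤ c2 * ‖x - y‖ ^ (-((d : ℝ) + 2 * β (x, y))) :=
  varKernel_near_diagonal_bounds_general d κ hκ s0 s1 hs0 hs1 β hβrange

end
end

section
/- Let G ⊂ ℝ^d be bounded and measurable, let γ be a nonnegative measurable symmetric kernel on G × G, and let s : G → [s0, s1] ⊂ (0,1) be measurable with κ > 0. Define the energy space V = {v ∈ L²(G) : ‖v‖_V < ∞}, where ‖v‖_V² = ‖κ^{s(·)} v‖_{L²(G)}² + ∬_{G×G} (v(x) − v(y))² γ(x,y) dy dx. Then (V, ‖·‖_V) is a complete normed space (a Hilbert space with the corresponding inner product). -/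
/-!
The energy norm splits as
`‖κ^s v‖²_{L²(G)} + ‖(v(x) - v(y)) √γ(x, y)‖²_{L²(G × G)}`,
so a Cauchy sequence `uₙ` gives Cauchy sequences `κ^s uₙ` and `(uₙ(x) - uₙ(y)) √γ(x, y)`
in two `L²` spaces, with limits `F` and `H`. The candidate limit is `U = κ^{-s} F`.
Along a subsequence `uₙ → U` a.e. on `G`, hence the differences converge a.e. on `G × G`,
which identifies `H` with the difference function of `U`.
-/

open MeasureTheory Real Set ENNReal

noncomputable section

/-- The squared variable-order energy norm
`‖v‖_V² = ‖κ^{s(·)} v‖_{L²(G)}² + ∬_{G×G} (v(x)−v(y))² γ(x,y) dy dx`,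
valued in `ℝ≥0∞`. -/
def energyNormSq (d : ℕ) (G : Set (EuclideanSpace ℝ (Fin d))) (κ : ℝ)
    (s : EuclideanSpace ℝ (Fin d) → ℝ)
    (γ : EuclideanSpace ℝ (Fin d) → EuclideanSpace ℝ (Fin d) → ℝ)
    (v : EuclideanSpace ℝ (Fin d) → ℝ) : ℝ≥0∞ :=
  (∫⁻ x in G, ENNReal.ofReal ((κ ^ s x * v x) ^ 2)) +
    ∫⁻ p in G ×ˢ G,
      ENNReal.ofReal ((v p.1 - v p.2) ^ 2 * γ p.1 p.2) ∂(volume.prod volume)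

open Filter Topology

lemma ENNReal.lt_of_sq_add_sq_lt_sq {a b c : ℝ≥0∞} (h : a ^ 2 + b ^ 2 < c ^ 2) :
    a < c ∧ b < c :=
  ⟨(ENNReal.pow_lt_pow_left_iff two_ne_zero).1 (le_self_add.trans_lt h),
    (ENNReal.pow_lt_pow_left_iff two_ne_zero).1 (le_add_self.trans_lt h)⟩

section Lp

variable {α : Type*} [MeasurableSpace α] {μ : Measure α}

lemma lintegral_ofReal_sq_eq_eLpNorm_sq (f : α → ℝ) :
    ∫⁻ x, ENNReal.ofReal (f x ^ 2) ∂μ = eLpNorm f 2 μ ^ 2 := by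
  have h := eLpNorm_nnreal_pow_eq_lintegral (f := f) (μ := μ) (p := 2) two_ne_zero
  simp only [NNReal.coe_ofNat, ENNReal.coe_ofNat, ENNReal.rpow_two] at h
  rw [h]
  refine lintegral_congr fun x => ?_
  rw [Real.enorm_eq_ofReal_abs, ← ENNReal.ofReal_pow (abs_nonneg _), sq_abs]

lemma exists_tendsto_eLpNorm_of_cauchy {E : Type*} [NormedAddCommGroup E] [CompleteSpace E]
    {p : ℝ≥0∞} [Fact (1 ≤ p)] {f : ℕ → α → E} (hf : ∀ n, MemLp (f n) p μ)
    (hcau : ∀ ε : ℝ, 0 < ε → ∃ N, ∀ m ≥ N, ∀ n ≥ N,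
      eLpNorm (f m - f n) p μ < ENNReal.ofReal ε) :
    ∃ F, StronglyMeasurable F ∧ MemLp F p μ ∧
      Tendsto (fun n => eLpNorm (f n - F) p μ) atTop (𝓝 0) := by
  have hL : CauchySeq fun n => (hf n).toLp (f n) := by
    refine Metric.cauchySeq_iff.2 fun ε hε => ?_
    obtain ⟨N, hN⟩ := hcau ε hε
    refine ⟨N, fun m hm n hn => ?_⟩
    rw [Lp.dist_edist, Lp.edist_toLp_toLp]
    exact ENNReal.toReal_lt_of_lt_ofReal (hN m hm n hn)
  obtain ⟨L, hfL⟩ := cauchySeq_tendsto_of_complete hL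
  rw [← Lp.toLp_coeFn L (Lp.memLp L)] at hfL
  exact ⟨L, Lp.stronglyMeasurable L, Lp.memLp L,
    (Lp.tendsto_Lp_iff_tendsto_eLpNorm'' f hf L (Lp.memLp L)).1 hfL⟩

lemma MeasureTheory.TendstoInMeasure.ae_eq_of_ae_tendsto {E : Type*} [EMetricSpace E]
    {f : ℕ → α → E} {F G : α → E} (hF : TendstoInMeasure μ f atTop F)
    (hG : ∀ᵐ x ∂μ, Tendsto (fun n => f n x) atTop (𝓝 (G x))) : F =ᵐ[μ] G := by
  obtain ⟨ns, hns, hF⟩ := hF.exists_seq_tendsto_ae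
  filter_upwards [hF, hG] with x hFx hGx
  exact tendsto_nhds_unique hFx (hGx.comp hns.tendsto_atTop)

end Lp

section WeightedDiff

variable {α : Type*} (γ : α → α → ℝ)

def weightedDiff (v : α → ℝ) (p : α × α) : ℝ := (v p.1 - v p.2) * √(γ p.1 p.2)

lemma weightedDiff_sub (v w : α → ℝ) :
    weightedDiff γ (fun x => v x - w x) = weightedDiff γ v - weightedDiff γ w := by
  ext p
  simp only [weightedDiff, Pi.sub_apply]
  ring

variable {γ} [MeasurableSpace α]

lemma Measurable.weightedDiff {v : α → ℝ} (hv : Measurable v)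
    (hγ : Measurable (Function.uncurry γ)) : Measurable (weightedDiff γ v) :=
  ((hv.comp measurable_fst).sub (hv.comp measurable_snd)).mul hγ.sqrt

lemma ae_tendsto_weightedDiff {μ : Measure α} [SFinite μ] {u : ℕ → α → ℝ}
    {U : α → ℝ}
    (h : ∀ᵐ x ∂μ, Tendsto (fun n => u n x) atTop (𝓝 (U x))) :
    ∀ᵐ p ∂μ.prod μ,
      Tendsto (fun n => weightedDiff γ (u n) p) atTop (𝓝 (weightedDiff γ U p)) := by
  filter_upwards [Measure.quasiMeasurePreserving_fst.ae h,
    Measure.quasiMeasurePreserving_snd.ae h] with p h₁ h₂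
  exact (h₁.sub h₂).mul_const _

end WeightedDiff

section Energy

variable {d : ℕ} {G : Set (EuclideanSpace ℝ (Fin d))} {κ : ℝ}
  {s : EuclideanSpace ℝ (Fin d) → ℝ}
  {γ : EuclideanSpace ℝ (Fin d) → EuclideanSpace ℝ (Fin d) → ℝ}

lemma energyNormSq_eq (hγ : ∀ x y, 0 ≤ γ x y) (v : EuclideanSpace ℝ (Fin d) → ℝ) :
    energyNormSq d G κ s γ v =
      eLpNorm (fun x => κ ^ s x * v x) 2 (volume.restrict G) ^ 2 +
        eLpNorm (weightedDiff γ v) 2 ((volume.restrict G).prod (volume.restrict G)) ^ 2 := by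
  rw [energyNormSq, Measure.prod_restrict, ← lintegral_ofReal_sq_eq_eLpNorm_sq,
    ← lintegral_ofReal_sq_eq_eLpNorm_sq]
  congr 2 with p
  rw [weightedDiff, mul_pow, sq_sqrt (hγ _ _)]

lemma energyNormSq_lt_top_iff (hs : Measurable s) (hγm : Measurable (Function.uncurry γ))
    (hγ : ∀ x y, 0 ≤ γ x y) {v : EuclideanSpace ℝ (Fin d) → ℝ} (hv : Measurable v) :
    energyNormSq d G κ s γ v < ⊤ ↔
      MemLp (fun x => κ ^ s x * v x) 2 (volume.restrict G) ∧
        MemLp (weightedDiff γ v) 2 ((volume.restrict G).prod (volume.restrict G)) := by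
  rw [energyNormSq_eq hγ, ENNReal.add_lt_top, ENNReal.pow_lt_top_iff, ENNReal.pow_lt_top_iff]
  simp only [two_ne_zero, or_false]
  exact and_congr
    ⟨fun h => ⟨((measurable_const.pow hs).mul hv).aestronglyMeasurable, h⟩,
      MemLp.eLpNorm_lt_top⟩
    ⟨fun h => ⟨(hv.weightedDiff hγm).aestronglyMeasurable, h⟩, MemLp.eLpNorm_lt_top⟩

lemma energyNormSq_sub_eq (hγ : ∀ x y, 0 ≤ γ x y) (v w : EuclideanSpace ℝ (Fin d) → ℝ) :
    energyNormSq d G κ s γ (fun x => v x - w x) =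
      eLpNorm ((fun x => κ ^ s x * v x) - fun x => κ ^ s x * w x) 2 (volume.restrict G) ^ 2 +
        eLpNorm (weightedDiff γ v - weightedDiff γ w) 2
          ((volume.restrict G).prod (volume.restrict G)) ^ 2 := by
  rw [energyNormSq_eq hγ, weightedDiff_sub]
  congr 3 with x
  simp only [Pi.sub_apply, mul_sub]

lemma cauchy_eLpNorm_of_cauchy_energyNormSq (hγ : ∀ x y, 0 ≤ γ x y)
    {u : ℕ → EuclideanSpace ℝ (Fin d) → ℝ}
    (hcauchy : ∀ ε : ℝ, 0 < ε → ∃ N : ℕ, ∀ m ≥ N, ∀ n ≥ N,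
      energyNormSq d G κ s γ (fun x => u m x - u n x) < ENNReal.ofReal ε) :
    (∀ ε : ℝ, 0 < ε → ∃ N : ℕ, ∀ m ≥ N, ∀ n ≥ N,
      eLpNorm ((fun x => κ ^ s x * u m x) - fun x => κ ^ s x * u n x) 2 (volume.restrict G)
        < ENNReal.ofReal ε) ∧
    (∀ ε : ℝ, 0 < ε → ∃ N : ℕ, ∀ m ≥ N, ∀ n ≥ N,
      eLpNorm (weightedDiff γ (u m) - weightedDiff γ (u n)) 2
        ((volume.restrict G).prod (volume.restrict G)) < ENNReal.ofReal ε) := by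
  refine ⟨fun ε hε => ?_, fun ε hε => ?_⟩ <;>
    obtain ⟨N, hN⟩ := hcauchy (ε ^ 2) (by positivity) <;>
    simp only [energyNormSq_sub_eq hγ, ENNReal.ofReal_pow hε.le] at hN
  · exact ⟨N, fun m hm n hn => (ENNReal.lt_of_sq_add_sq_lt_sq (hN m hm n hn)).1⟩
  · exact ⟨N, fun m hm n hn => (ENNReal.lt_of_sq_add_sq_lt_sq (hN m hm n hn)).2⟩

lemma tendsto_energyNormSq_sub (hγ : ∀ x y, 0 ≤ γ x y)
    {u : ℕ → EuclideanSpace ℝ (Fin d) → ℝ} {U : EuclideanSpace ℝ (Fin d) → ℝ}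
    (h₁ : Tendsto (fun n => eLpNorm ((fun x => κ ^ s x * u n x) - fun x => κ ^ s x * U x) 2
      (volume.restrict G)) atTop (𝓝 0))
    (h₂ : Tendsto (fun n => eLpNorm (weightedDiff γ (u n) - weightedDiff γ U) 2
      ((volume.restrict G).prod (volume.restrict G))) atTop (𝓝 0)) :
    Tendsto (fun n => energyNormSq d G κ s γ (fun x => u n x - U x)) atTop (𝓝 0) := by
  simp only [energyNormSq_sub_eq hγ]
  simpa using (ENNReal.Tendsto.pow (n := 2) h₁).add (ENNReal.Tendsto.pow (n := 2) h₂)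

end Energy

theorem energy_space_complete_general
    (d : ℕ)
    (G : Set (EuclideanSpace ℝ (Fin d)))
    (κ : ℝ) (hκ : 0 < κ)
    (s : EuclideanSpace ℝ (Fin d) → ℝ) (hsmeas : Measurable s)
    (γ : EuclideanSpace ℝ (Fin d) → EuclideanSpace ℝ (Fin d) → ℝ)
    (hγmeas : Measurable (Function.uncurry γ))
    (hγnonneg : ∀ x y, 0 ≤ γ x y)
    (u : ℕ → EuclideanSpace ℝ (Fin d) → ℝ)
    (humeas : ∀ n, Measurable (u n))
    (hufin : ∀ n, energyNormSq d G κ s γ (u n) < ⊤)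
    (hcauchy : ∀ ε : ℝ, 0 < ε → ∃ N : ℕ, ∀ m ≥ N, ∀ n ≥ N,
      energyNormSq d G κ s γ (fun x => u m x - u n x) < ENNReal.ofReal ε) :
    ∃ uLim : EuclideanSpace ℝ (Fin d) → ℝ, Measurable uLim ∧
      energyNormSq d G κ s γ uLim < ⊤ ∧
      Filter.Tendsto (fun n => energyNormSq d G κ s γ (fun x => u n x - uLim x))
        Filter.atTop (nhds 0) := by
  have hmem n := (energyNormSq_lt_top_iff hsmeas hγmeas hγnonneg (humeas n)).1 (hufin n)
  obtain ⟨hcau₁, hcau₂⟩ := cauchy_eLpNorm_of_cauchy_energyNormSq hγnonneg hcauchy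
  obtain ⟨F, hFm, hF, hfF⟩ := exists_tendsto_eLpNorm_of_cauchy (fun n => (hmem n).1) hcau₁
  obtain ⟨H, -, hH, hgH⟩ := exists_tendsto_eLpNorm_of_cauchy (fun n => (hmem n).2) hcau₂
  have hw x : κ ^ s x ≠ 0 := (rpow_pos_of_pos hκ _).ne'
  let U x := F x / κ ^ s x
  have hFU : F = fun x => κ ^ s x * U x := funext fun x => (mul_div_cancel₀ _ (hw x)).symm
  have hUm : Measurable U := hFm.measurable.div (measurable_const.pow hsmeas)
  rw [hFU] at hF hfF
  obtain ⟨φ, hφ, hφU⟩ := (tendstoInMeasure_of_tendsto_eLpNorm two_ne_zero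
    (fun n => (hmem n).1.1) hF.1 hfF).exists_seq_tendsto_ae
  have huU : ∀ᵐ x ∂volume.restrict G, Tendsto (fun k => u (φ k) x) atTop (𝓝 (U x)) := by
    filter_upwards [hφU] with x hx
    simpa only [mul_div_cancel_left₀ _ (hw x)] using hx.div_const (κ ^ s x)
  have hHU : H =ᵐ[(volume.restrict G).prod (volume.restrict G)] weightedDiff γ U :=
    (tendstoInMeasure_of_tendsto_eLpNorm two_ne_zero (fun n => (hmem (φ n)).2.1) hH.1
      (hgH.comp hφ.tendsto_atTop)).ae_eq_of_ae_tendsto (ae_tendsto_weightedDiff huU)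
  refine ⟨U, hUm, (energyNormSq_lt_top_iff hsmeas hγmeas hγnonneg hUm).2 ⟨hF, hH.ae_eq hHU⟩,
    tendsto_energyNormSq_sub hγnonneg hfF ?_⟩
  exact hgH.congr fun n => eLpNorm_congr_ae (EventuallyEq.rfl.sub hHU)

/-- Completeness of the variable-order energy space: every Cauchy sequence
(with respect to the energy norm) of functions of finite energy norm converges
in the energy norm to a function of finite energy norm. -/
theorem energy_space_complete
    (d : ℕ) (hd : 1 ≤ d)
    (G : Set (EuclideanSpace ℝ (Fin d))) (hGmeas : MeasurableSet G)
    (hGbdd : Bornology.IsBounded G)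
    (κ : ℝ) (hκ : 0 < κ)
    (s0 s1 : ℝ) (hs0 : 0 < s0) (hs01 : s0 ≤ s1) (hs1 : s1 < 1)
    (s : EuclideanSpace ℝ (Fin d) → ℝ) (hsmeas : Measurable s)
    (hsrange : ∀ x, s x ∈ Set.Icc s0 s1)
    (γ : EuclideanSpace ℝ (Fin d) → EuclideanSpace ℝ (Fin d) → ℝ)
    (hγmeas : Measurable (Function.uncurry γ))
    (hγnonneg : ∀ x y, 0 ≤ γ x y)
    (hγsymm : ∀ x y, γ x y = γ y x)
    (u : ℕ → EuclideanSpace ℝ (Fin d) → ℝ)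
    (humeas : ∀ n, Measurable (u n))
    (hufin : ∀ n, energyNormSq d G κ s γ (u n) < ⊤)
    (hcauchy : ∀ ε : ℝ, 0 < ε → ∃ N : ℕ, ∀ m ≥ N, ∀ n ≥ N,
      energyNormSq d G κ s γ (fun x => u m x - u n x) < ENNReal.ofReal ε) :
    ∃ uLim : EuclideanSpace ℝ (Fin d) → ℝ, Measurable uLim ∧
      energyNormSq d G κ s γ uLim < ⊤ ∧
      Filter.Tendsto (fun n => energyNormSq d G κ s γ (fun x => u n x - uLim x))
        Filter.atTop (nhds 0) :=
  energy_space_complete_general d G κ hκ s hsmeas γ hγmeas hγnonneg u humeas hufin hcauchy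

end
end
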